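/- Suppose v ∈ H(Ω) has the regularity v = L u for some u ∈ L²(Ω), where L is the kernel integral operator. Then the H-norm projection error admits the 'doubling trick' bound: ‖(I − Π_N)v‖_{H(Ω)} ≤ |Ω|^{1/2} · (sup_{ξ∈Ω} P_N(ξ)) · ‖u‖_{L²(Ω)}. -/

import Mathlib

open scoped RealInnerProductSpace
open MeasureTheory

/-- Doubling trick: if `v = L u` for the kernel integral operator `L` and some `u ∈ L²(Ω)`, then
`‖(I − Π_N)v‖_H ≤ |Ω|^{1/2} · (sup_{ξ∈Ω} P_N(ξ)) · ‖u‖_{L²(Ω)}`. -/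
theorem rkhs_doubling_trick_bound
    {n : ℕ} (Ω : Set (EuclideanSpace ℝ (Fin n))) (hΩ : IsCompact Ω)
    {H : Type*} [NormedAddCommGroup H] [InnerProductSpace ℝ H] [CompleteSpace H]
    (K : EuclideanSpace ℝ (Fin n) → EuclideanSpace ℝ (Fin n) → ℝ)
    (Ksec : EuclideanSpace ℝ (Fin n) → H) (eval : H → EuclideanSpace ℝ (Fin n) → ℝ)
    (hker : ∀ x y, K x y = ⟪Ksec x, Ksec y⟫)
    (hrepro : ∀ (f : H) (x), eval f x = ⟪f, Ksec x⟫)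
    (Lop : (EuclideanSpace ℝ (Fin n) → ℝ) → H)
    (hL : ∀ (u : EuclideanSpace ℝ (Fin n) → ℝ) (x),
      eval (Lop u) x = ∫ y in Ω, K x y * u y)
    (hadj : ∀ (w : H) (u : EuclideanSpace ℝ (Fin n) → ℝ),
      MemLp u 2 (volume.restrict Ω) → ⟪w, Lop u⟫ = ∫ y in Ω, eval w y * u y)
    (proj : H →ₗ[ℝ] H) (HN : Submodule ℝ H)
    (hmem : ∀ v : H, proj v ∈ HN)
    (horth : ∀ v : H, ∀ w ∈ HN, ⟪v - proj v, w⟫ = 0)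
    (PN : EuclideanSpace ℝ (Fin n) → ℝ)
    (hpow : ∀ (f : H) (x), x ∈ Ω → |eval (f - proj f) x| ≤ PN x * ‖f - proj f‖)
    (PNmax : ℝ) (hPNmax : ∀ ξ ∈ Ω, PN ξ ≤ PNmax) (hPNnonneg : 0 ≤ PNmax)
    (u : EuclideanSpace ℝ (Fin n) → ℝ) (hu : MemLp u 2 (volume.restrict Ω))
    (v : H) (hv : v = Lop u) :
    ‖v - proj v‖ ≤
      Real.sqrt (volume Ω).toReal * PNmax * Real.sqrt (∫ y in Ω, (u y) ^ 2) := by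
  set a : H := v - proj v with ha
  have hΩm : MeasurableSet Ω := hΩ.isClosed.measurableSet
  haveI hfin : IsFiniteMeasure (volume.restrict Ω) :=
    ⟨by rw [Measure.restrict_apply_univ]; exact hΩ.measure_lt_top⟩
  have huint : Integrable u (volume.restrict Ω) := hu.integrable (by norm_num)
  -- key identity: ‖a‖² = ∫ eval a * u
  have hav : (⟪a, v⟫ : ℝ) = ‖a‖ ^ 2 := by
    have h1 : v = a + proj v := by simp [ha]
    rw [h1, inner_add_right, horth v (proj v) (hmem v), add_zero,
      real_inner_self_eq_norm_sq]
  have key : ‖a‖ ^ 2 = ∫ y in Ω, eval a y * u y := by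
    rw [← hav]
    have := hadj a u hu
    rw [← hv] at this
    exact this
  -- pointwise bound
  have hbound : ∫ y in Ω, eval a y * u y ≤ PNmax * ‖a‖ * ∫ y in Ω, |u y| := by
    have hint : Integrable (fun y => PNmax * ‖a‖ * |u y|) (volume.restrict Ω) :=
      (huint.abs).const_mul _
    have hptw : ∀ᵐ y ∂(volume.restrict Ω), eval a y * u y ≤ PNmax * ‖a‖ * |u y| := by
      filter_upwards [ae_restrict_mem hΩm] with y hy
      calc eval a y * u y ≤ |eval a y * u y| := le_abs_self _
        _ = |eval a y| * |u y| := abs_mul _ _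
        _ ≤ (PN y * ‖a‖) * |u y| := by
            exact mul_le_mul_of_nonneg_right (hpow v y hy) (abs_nonneg _)
        _ ≤ (PNmax * ‖a‖) * |u y| := by
            have h2 : PN y * ‖a‖ ≤ PNmax * ‖a‖ :=
              mul_le_mul_of_nonneg_right (hPNmax y hy) (norm_nonneg _)
            exact mul_le_mul_of_nonneg_right h2 (abs_nonneg _)
    have hle : ∫ y in Ω, eval a y * u y ≤ ∫ y in Ω, PNmax * ‖a‖ * |u y| := by
      by_cases hI : Integrable (fun y => eval a y * u y) (volume.restrict Ω)
      · exact integral_mono_ae hI hint hptw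
      · rw [integral_undef hI]
        refine integral_nonneg fun y => ?_
        exact mul_nonneg (mul_nonneg hPNnonneg (norm_nonneg _)) (abs_nonneg _)
    calc ∫ y in Ω, eval a y * u y ≤ ∫ y in Ω, PNmax * ‖a‖ * |u y| := hle
      _ = PNmax * ‖a‖ * ∫ y in Ω, |u y| := integral_const_mul _ _
  -- Cauchy–Schwarz: ∫ |u| ≤ √|Ω| * √(∫ u²)
  have htwo : ((2 : ENNReal)) = ENNReal.ofReal (2 : ℝ) := by norm_num
  have hu2 : MemLp u (ENNReal.ofReal (2 : ℝ)) (volume.restrict Ω) := htwo ▸ hu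
  have hone : MemLp (fun _ : EuclideanSpace ℝ (Fin n) => (1 : ℝ))
      (ENNReal.ofReal (2 : ℝ)) (volume.restrict Ω) := memLp_const 1
  have hpq : (2 : ℝ).HolderConjugate 2 := by constructor <;> norm_num
  have hcs := integral_mul_norm_le_Lp_mul_Lq hpq hone hu2
  have hCS : ∫ y in Ω, |u y| ≤
      Real.sqrt (volume Ω).toReal * Real.sqrt (∫ y in Ω, (u y) ^ 2) := by
    have e1 : ∫ y in Ω, ‖(1 : ℝ)‖ * ‖u y‖ = ∫ y in Ω, |u y| := by
      simp [Real.norm_eq_abs]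
    have e2 : ∫ y in Ω, ‖(1 : ℝ)‖ ^ (2 : ℝ) = (volume Ω).toReal := by
      simp [Measure.restrict_apply_univ, Measure.real]
    have e3 : ∫ y in Ω, ‖u y‖ ^ (2 : ℝ) = ∫ y in Ω, (u y) ^ 2 := by
      refine integral_congr_ae (Filter.Eventually.of_forall fun y => ?_)
      show ‖u y‖ ^ (2 : ℝ) = (u y) ^ 2
      rw [show (2 : ℝ) = ((2 : ℕ) : ℝ) by norm_num, Real.rpow_natCast,
        Real.norm_eq_abs, sq_abs]
    rw [e1, e2, e3] at hcs
    calc ∫ y in Ω, |u y| ≤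
        (volume Ω).toReal ^ (1 / 2 : ℝ) * (∫ y in Ω, (u y) ^ 2) ^ (1 / 2 : ℝ) := hcs
      _ = Real.sqrt (volume Ω).toReal * Real.sqrt (∫ y in Ω, (u y) ^ 2) := by
          rw [Real.sqrt_eq_rpow, Real.sqrt_eq_rpow]
  -- combine
  set C : ℝ := Real.sqrt (volume Ω).toReal * PNmax * Real.sqrt (∫ y in Ω, (u y) ^ 2) with hC
  have hCnonneg : 0 ≤ C :=
    mul_nonneg (mul_nonneg (Real.sqrt_nonneg _) hPNnonneg) (Real.sqrt_nonneg _)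
  have hfinal : ‖a‖ ^ 2 ≤ C * ‖a‖ := by
    calc ‖a‖ ^ 2 = ∫ y in Ω, eval a y * u y := key
      _ ≤ PNmax * ‖a‖ * ∫ y in Ω, |u y| := hbound
      _ ≤ PNmax * ‖a‖ *
          (Real.sqrt (volume Ω).toReal * Real.sqrt (∫ y in Ω, (u y) ^ 2)) := by
          refine mul_le_mul_of_nonneg_left hCS ?_
          exact mul_nonneg hPNnonneg (norm_nonneg _)
      _ = C * ‖a‖ := by rw [hC]; ring
  rcases eq_or_lt_of_le (norm_nonneg a) with h0 | h0
  · rw [← h0]; exact hCnonneg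
  · have := hfinal
    rw [sq] at this
    exact le_of_mul_le_mul_right this h0
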